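/- arXiv:1311.7236 — 4 statements merged into one kernel-verified Lean document; each statement's English description precedes it below -/
import Mathlib

section
/- Let A be a finite set with |A| = 2^(m+d), let f : A → Fin (2^k) and π : A → Fin (2^m) be functions with m > k ≥ 0 and every fiber of π having exactly 2^d elements. Call a ∈ A ambiguous if there exists a' ∈ A with f a' = f a and π a' ≠ π a. Then strictly more than half of the elements of A are ambiguous. -/
/-!
An element is unambiguous exactly when `π` is constant on its `f`-fiber. If every `f`-fiber
had this property, `π` would factor through `f`, which is impossible for a surjective `π` into
a larger codomain. So at most `2^k - 1` of the `f`-fibers consist of unambiguous elements, each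
of them lies inside a single `π`-fiber, and the unambiguous elements number at most
`(2^k - 1) * 2^d < 2^(m+d) / 2`.
-/

open Finset

section Ambiguity

variable {A β γ : Type*} (f : A → β) (π : A → γ)

def IsAmbiguous (a : A) : Prop := ∃ a', f a' = f a ∧ π a' ≠ π a

variable {f π}

theorem not_isAmbiguous_iff {a : A} :
    ¬ IsAmbiguous f π a ↔ ∀ a', f a' = f a → π a' = π a := by
  simp [IsAmbiguous]

theorem exists_forall_isAmbiguous [Fintype β] [Fintype γ] (hπ : Function.Surjective π)
    (hcard : Fintype.card β < Fintype.card γ) : ∃ c, ∀ a, f a = c → IsAmbiguous f π a := by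
  by_contra! h
  choose b hfb hb using h
  have hfactor : π = π ∘ b ∘ f :=
    funext fun a ↦ not_isAmbiguous_iff.mp (hb (f a)) a (hfb (f a)).symm
  have : Function.Surjective (π ∘ b) := by
    rw [hfactor] at hπ
    exact .of_comp hπ
  exact (Fintype.card_le_of_surjective _ this).not_gt hcard

theorem card_filter_not_isAmbiguous_le [Fintype A] [Fintype β] [DecidableEq β] [Fintype γ]
    [DecidableEq γ] [DecidablePred (IsAmbiguous f π)] {n : ℕ} (hπ : Function.Surjective π)
    (hfiber : ∀ c, #{a | π a = c} ≤ n) (hcard : Fintype.card β < Fintype.card γ) :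
    #{a | ¬ IsAmbiguous f π a} ≤ (Fintype.card β - 1) * n := by
  set N : Finset A := {a | ¬ IsAmbiguous f π a}
  obtain ⟨c, hc⟩ := exists_forall_isAmbiguous hπ hcard
  have himage : #(N.image f) ≤ Fintype.card β - 1 := by
    have : c ∉ N.image f := by
      simp only [N, mem_image, mem_filter, mem_univ, true_and, not_exists, not_and]
      exact fun a ha hfa ↦ ha (hc a hfa)
    have := card_lt_univ_of_notMem this
    omega
  have hfiberN : ∀ y ∈ N.image f, #{a ∈ N | f a = y} ≤ n := by
    simp only [N, mem_image, mem_filter, mem_univ, true_and]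
    rintro _ ⟨b, hb, rfl⟩
    refine le_trans (card_le_card fun a ha ↦ ?_) (hfiber (π b))
    simp only [mem_filter, mem_univ, true_and] at ha ⊢
    exact not_isAmbiguous_iff.mp hb a ha.2
  calc #N ≤ n * #(N.image f) := card_le_mul_card_image N n hfiberN
    _ ≤ (Fintype.card β - 1) * n := by rw [mul_comm]; gcongr

end Ambiguity

/-- If `|A| = 2^(m+d)`, `f : A → Fin (2^k)`, `π : A → Fin (2^m)` with `m > k`
and every fiber of `π` of size exactly `2^d`, then strictly more than half of
the elements of `A` are ambiguous, i.e. admit some `a'` with the same `f`-value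
but a different `π`-value. -/
theorem majority_ambiguous (A : Type*) [Finite A] (m d k : ℕ) (hmk : k < m)
    (hA : Nat.card A = 2 ^ (m + d))
    (f : A → Fin (2 ^ k)) (π : A → Fin (2 ^ m))
    (hfib : ∀ c : Fin (2 ^ m), Nat.card {a : A // π a = c} = 2 ^ d) :
    Nat.card A < 2 * Nat.card {a : A // ∃ a', f a' = f a ∧ π a' ≠ π a} := by
  classical
  change Nat.card A < 2 * Nat.card {a // IsAmbiguous f π a}
  cases nonempty_fintype A
  simp only [Nat.card_eq_fintype_card, Fintype.card_subtype] at hA hfib ⊢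
  have hπ : Function.Surjective π := fun c ↦ by
    obtain ⟨a, ha⟩ := card_pos.mp (hfib c ▸ Nat.two_pow_pos d)
    exact ⟨a, (mem_filter.mp ha).2⟩
  have hunamb := card_filter_not_isAmbiguous_le (f := f) hπ (fun c ↦ (hfib c).le)
    (by simpa using Nat.pow_lt_pow_right one_lt_two hmk)
  have hsplit := card_filter_add_card_filter_not (s := univ) fun a ↦ IsAmbiguous f π a
  simp only [Fintype.card_fin, card_univ] at hunamb hsplit
  have hbound : 2 * ((2 ^ k - 1) * 2 ^ d) < 2 ^ (m + d) :=
    calc 2 * ((2 ^ k - 1) * 2 ^ d) < 2 * (2 ^ k * 2 ^ d) := by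
          gcongr; exact Nat.sub_lt (Nat.two_pow_pos k) one_pos
      _ = 2 ^ (k + 1 + d) := by ring
      _ ≤ 2 ^ (m + d) := Nat.pow_le_pow_right two_pos (by omega)
  omega
end

section
/- Let X be a finite set of variables, n ≥ 1, and for each i ∈ Fin n let W i ⊆ X be the set of variables visible to service i, with ⋃ i, W i = X. Suppose each service has exactly one private variable, i.e., for each i there is x_i ∈ W i with x_i ∉ W j for all j ≠ i, and the x_i are the only such private variables (|W i \ ⋃_{j≠i} W j| = 1). Let V = X \ {x_i : i ∈ Fin n}. Then there exists a flat tracking function iff there exists some i with V ⊆ W i. A flat tracking function is a function t : Fin n → Set X with t i ⊆ W i for each i, ⋃ i, t i = X, and at most one index i with |t i| ≥ 2. -/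
/-!
Every private variable `x j` is visible only to service `j`, so a tracking function must put it in
`t j`. A non-private variable `v` then shares its block `t i` with `x i`, making that block a
non-singleton; hence all non-private variables lie in the one non-singleton block, which sits inside
some `W i`. Conversely, if `W i` contains every non-private variable, take `t i = W i` and
`t j = {x j}` for `j ≠ i`.
-/

open Set

section

variable {X ι : Type*}

def IsFlatTracking (W t : ι → Set X) : Prop :=
  (∀ i, t i ⊆ W i) ∧ (⋃ i, t i) = univ ∧ ∀ i j, 2 ≤ (t i).ncard → 2 ≤ (t j).ncard → i = j

theorem mem_and_notMem_of_private_eq_singleton {W : ι → Set X} {i : ι} {a : X}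
    (h : {v | v ∈ W i ∧ ∀ j, j ≠ i → v ∉ W j} = {a}) : a ∈ W i ∧ ∀ j, j ≠ i → a ∉ W j := by
  have ha : a ∈ {v | v ∈ W i ∧ ∀ j, j ≠ i → v ∉ W j} := h ▸ rfl
  exact ha

namespace IsFlatTracking

variable {W t : ι → Set X} {x : ι → X}

theorem private_mem (ht : IsFlatTracking W t) (hx : ∀ i j, x i ∈ W j → j = i) (i : ι) :
    x i ∈ t i := by
  obtain ⟨j, hj⟩ := mem_iUnion.mp (eq_univ_iff_forall.mp ht.2.1 (x i))
  exact hx i j (ht.1 j hj) ▸ hj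

theorem two_le_ncard_of_mem_nonprivate [Finite X] (ht : IsFlatTracking W t)
    (hx : ∀ i j, x i ∈ W j → j = i) {v : X} (hv : v ∉ range x) {i : ι} (hvi : v ∈ t i) :
    2 ≤ (t i).ncard :=
  one_lt_ncard_iff_nontrivial.mpr ⟨x i, ht.private_mem hx i, v, hvi, fun h => hv ⟨i, h⟩⟩

theorem exists_nonprivate_subset [Finite X] [Nonempty ι] (ht : IsFlatTracking W t)
    (hx : ∀ i j, x i ∈ W j → j = i) : ∃ i, {v | v ∉ range x} ⊆ W i := by
  have hcover (v : X) : ∃ i, v ∈ t i := mem_iUnion.mp (eq_univ_iff_forall.mp ht.2.1 v)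
  by_cases hV : ∃ v₀, v₀ ∉ range x
  · obtain ⟨v₀, hv₀⟩ := hV
    obtain ⟨i, hi⟩ := hcover v₀
    refine ⟨i, fun v hv => ?_⟩
    obtain ⟨j, hj⟩ := hcover v
    have hji : j = i := ht.2.2 j i (ht.two_le_ncard_of_mem_nonprivate hx hv hj)
      (ht.two_le_ncard_of_mem_nonprivate hx hv₀ hi)
    exact ht.1 i (hji ▸ hj)
  · exact ⟨Classical.arbitrary ι, fun v hv => (hv (not_exists_not.mp hV v)).elim⟩

end IsFlatTracking

theorem exists_isFlatTracking_of_nonprivate_subset {W : ι → Set X} {x : ι → X}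
    (hxW : ∀ j, x j ∈ W j) {i : ι} (hi : {v | v ∉ range x} ⊆ W i) :
    ∃ t, IsFlatTracking W t := by
  classical
  set t : ι → Set X := Function.update (fun j => {x j}) i (W i)
  refine ⟨t, fun j => ?_, ?_, fun j k hj hk => ?_⟩
  · rcases eq_or_ne j i with rfl | h <;> simp [t, *]
  · refine eq_univ_of_forall fun v => mem_iUnion.mpr ?_
    by_cases hv : v ∈ range x
    · obtain ⟨j, rfl⟩ := hv
      exact ⟨j, by rcases eq_or_ne j i with rfl | h <;> simp [t, *]⟩
    · exact ⟨i, by simpa [t] using hi hv⟩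
  · have hsingle (l : ι) (hl : 2 ≤ (t l).ncard) : l = i := by
      by_contra h
      simp [t, h] at hl
    rw [hsingle j hj, hsingle k hk]

end

theorem flat_tracking_iff_general (X : Type*) [Finite X] (n : ℕ) (hn : 1 ≤ n)
    (W : Fin n → Set X)
    (x : Fin n → X)
    (hpriv : ∀ i, {v | v ∈ W i ∧ ∀ j, j ≠ i → v ∉ W j} = {x i}) :
    (∃ t : Fin n → Set X,
        (∀ i, t i ⊆ W i) ∧ (⋃ i, t i) = Set.univ ∧
        ∀ i j, 2 ≤ (t i).ncard → 2 ≤ (t j).ncard → i = j) ↔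
      ∃ i, {v : X | v ∉ Set.range x} ⊆ W i := by
  have hxW (i : Fin n) : x i ∈ W i := (mem_and_notMem_of_private_eq_singleton (hpriv i)).1
  have hx (i j : Fin n) (h : x i ∈ W j) : j = i :=
    by_contra fun hne => (mem_and_notMem_of_private_eq_singleton (hpriv i)).2 j hne h
  have : Nonempty (Fin n) := ⟨⟨0, hn⟩⟩
  exact ⟨fun ⟨_, ht⟩ => IsFlatTracking.exists_nonprivate_subset ht hx,
    fun ⟨_, hi⟩ => exists_isFlatTracking_of_nonprivate_subset hxW hi⟩

/-- Characterization of flat tracking functions for a flat protocol in which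
every service `i` has exactly one private variable `x i`: a flat tracking
function exists iff some service sees all non-private variables. -/
theorem flat_tracking_iff (X : Type*) [Finite X] (n : ℕ) (hn : 1 ≤ n)
    (W : Fin n → Set X) (hcover : (⋃ i, W i) = Set.univ)
    (x : Fin n → X)
    (hpriv : ∀ i, {v | v ∈ W i ∧ ∀ j, j ≠ i → v ∉ W j} = {x i}) :
    (∃ t : Fin n → Set X,
        (∀ i, t i ⊆ W i) ∧ (⋃ i, t i) = Set.univ ∧
        ∀ i j, 2 ≤ (t i).ncard → 2 ≤ (t j).ncard → i = j) ↔
      ∃ i, {v : X | v ∉ Set.range x} ⊆ W i :=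
  flat_tracking_iff_general X n hn W x hpriv
end

section
/- Let X be a finite set, n ≥ 1, and W : Fin n → Set X with ⋃ i, W i = X. Suppose t : Fin n → Set X satisfies t i ⊆ W i for all i, ⋃ i, t i = X, and there is at most one index i with 2 ≤ |t i|. If for each i there is a private variable x_i ∈ W i \ ⋃_{j ≠ i} W j, then x_j ∈ t j for every j, and there exists an index i₀ with X \ ({x_j : j ∈ Fin n} \ {x_{i₀}}) ⊆ W i₀. -/
/-! Since the tracked sets cover everything and lie inside the input sets, a private variable of
service `j` can only be tracked by `j` itself. All services but one track at most one variable,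
hence exactly their private one; so every variable other than those private ones is tracked by,
and therefore seen by, the remaining service. -/

open Set

section FlatTracking

variable {X ι : Type*} {W t : ι → Set X} {x : ι → X}

theorem mem_of_forall_not_mem (hsub : ∀ i, t i ⊆ W i) (htcover : ⋃ i, t i = univ) {j : ι}
    (hpriv : ∀ i, i ≠ j → x j ∉ W i) : x j ∈ t j := by
  obtain ⟨i, hi⟩ := mem_iUnion.1 (htcover ▸ mem_univ (x j))
  obtain rfl | hij := eq_or_ne i j
  · exact hi
  · exact absurd (hsub i hi) (hpriv i hij)

theorem univ_diff_range_diff_subset (hsub : ∀ i, t i ⊆ W i) (htcover : ⋃ i, t i = univ)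
    {i₀ : ι} (hpriv : ∀ j, j ≠ i₀ → x i₀ ∉ W j) (hsingle : ∀ j, j ≠ i₀ → t j ⊆ {x j}) :
    univ \ (range x \ {x i₀}) ⊆ W i₀ := by
  rintro y ⟨-, hy⟩
  obtain ⟨j, hj⟩ := mem_iUnion.1 (htcover ▸ mem_univ y)
  obtain rfl | hne := eq_or_ne j i₀
  · exact hsub j hj
  · have hyx : y = x j := hsingle j hne hj
    have hyx₀ : y = x i₀ := by
      by_contra h
      exact hy ⟨⟨j, hyx.symm⟩, h⟩
    exact absurd (hyx₀ ▸ hsub j hj) (hpriv j hne)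

end FlatTracking

theorem exists_forall_ne_not_of_unique {ι : Type*} [Nonempty ι] {p : ι → Prop}
    (h : ∀ i j, p i → p j → i = j) : ∃ i₀, ∀ j, j ≠ i₀ → ¬ p j := by
  by_cases hp : ∃ i, p i
  · obtain ⟨i₀, hi₀⟩ := hp
    exact ⟨i₀, fun j hj hpj => hj (h j i₀ hpj hi₀)⟩
  · exact ⟨Classical.arbitrary ι, fun j _ hpj => hp ⟨j, hpj⟩⟩

theorem flat_tracking_private_vars_general (X : Type*) [Finite X] (n : ℕ) (hn : 1 ≤ n)
    (W : Fin n → Set X)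
    (t : Fin n → Set X) (hsub : ∀ i, t i ⊆ W i)
    (htcover : (⋃ i, t i) = Set.univ)
    (hone : ∀ i j, 2 ≤ (t i).ncard → 2 ≤ (t j).ncard → i = j)
    (x : Fin n → X)
    (hpriv : ∀ i, x i ∈ W i ∧ ∀ j, j ≠ i → x i ∉ W j) :
    (∀ j, x j ∈ t j) ∧
      ∃ i₀, Set.univ \ (Set.range x \ {x i₀}) ⊆ W i₀ := by
  have hx : ∀ j, x j ∈ t j := fun j => mem_of_forall_not_mem hsub htcover (hpriv j).2
  have : Nonempty (Fin n) := ⟨⟨0, hn⟩⟩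
  obtain ⟨i₀, hsmall⟩ := exists_forall_ne_not_of_unique hone
  refine ⟨hx, i₀, univ_diff_range_diff_subset hsub htcover (hpriv i₀).2 fun j hj => ?_⟩
  have hle : (t j).ncard ≤ 1 := by have := hsmall j hj; omega
  exact ((ncard_le_one_iff_subsingleton.1 hle).eq_singleton_of_mem (hx j)).subset

/-- Any flat tracking function `t` for a flat protocol in which each service
`i` has a private variable `x i` must put `x j` into `t j` for every `j`, and
some single service `i₀` must see all variables except the private variables
of the other services. -/
theorem flat_tracking_private_vars (X : Type*) [Finite X] (n : ℕ) (hn : 1 ≤ n)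
    (W : Fin n → Set X) (hcover : (⋃ i, W i) = Set.univ)
    (t : Fin n → Set X) (hsub : ∀ i, t i ⊆ W i)
    (htcover : (⋃ i, t i) = Set.univ)
    (hone : ∀ i j, 2 ≤ (t i).ncard → 2 ≤ (t j).ncard → i = j)
    (x : Fin n → X)
    (hpriv : ∀ i, x i ∈ W i ∧ ∀ j, j ≠ i → x i ∉ W j) :
    (∀ j, x j ∈ t j) ∧
      ∃ i₀, Set.univ \ (Set.range x \ {x i₀}) ⊆ W i₀ :=
  flat_tracking_private_vars_general X n hn W t hsub htcover hone x hpriv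
end

section
/- Let G = (V, E) be a finite directed acyclic graph and (u, v) ∈ E with u, v distinct. Define the u-v-bypass G' by removing the edge (u, v) and adding, for every edge (w, u) ∈ E, the edge (w, v). Then G' is again a directed acyclic graph, and reachability in G' implies reachability in G (every directed path in G' from a to b yields a directed path in G from a to b). -/
/-- The `u`-`v`-bypass of the edge relation `E`: the edge `(u, v)` is removed
and, for every edge `(w, u)`, an edge `(w, v)` is added. -/
def bypassRel {V : Type*} (E : V → V → Prop) (u v : V) : V → V → Prop :=
  fun a b => (E a b ∧ ¬(a = u ∧ b = v)) ∨ (E a u ∧ b = v)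

section Bypass

variable {V : Type*} {E : V → V → Prop} {u v a b : V}

/-- A new edge `(w, v)` of the bypass is the path `w → u → v` of `E`. -/
theorem transGen_of_bypassRel (he : E u v) (h : bypassRel E u v a b) :
    Relation.TransGen E a b := by
  rcases h with ⟨hab, -⟩ | ⟨hau, rfl⟩
  · exact .single hab
  · exact .tail (.single hau) he

theorem transGen_of_transGen_bypassRel (he : E u v)
    (h : Relation.TransGen (bypassRel E u v) a b) : Relation.TransGen E a b :=
  Relation.TransGen.lift' id (fun _ _ => transGen_of_bypassRel he) _ _ h

theorem reflTransGen_of_reflTransGen_bypassRel (he : E u v)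
    (h : Relation.ReflTransGen (bypassRel E u v) a b) : Relation.ReflTransGen E a b :=
  Relation.ReflTransGen.lift' id
    (fun _ _ hab => (transGen_of_bypassRel he hab).to_reflTransGen) _ _ h

end Bypass

theorem bypass_dag_reach_general {V : Type*} (E : V → V → Prop)
    (hacyc : ∀ w, ¬ Relation.TransGen E w w) (u v : V) (he : E u v) :
    (∀ w : V, ¬ Relation.TransGen (bypassRel E u v) w w) ∧
    ∀ a b : V, Relation.ReflTransGen (bypassRel E u v) a b →
      Relation.ReflTransGen E a b :=
  ⟨fun w hw => hacyc w (transGen_of_transGen_bypassRel he hw),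
    fun _ _ => reflTransGen_of_reflTransGen_bypassRel he⟩

/-- The bypass of an edge `(u, v)` of a finite DAG is again a DAG, and every
directed path in the bypass yields a directed path in the original graph. -/
theorem bypass_dag_reach {V : Type*} [Fintype V] (E : V → V → Prop)
    (hacyc : ∀ w, ¬ Relation.TransGen E w w) (u v : V) (he : E u v)
    (huv : u ≠ v) :
    (∀ w : V, ¬ Relation.TransGen (bypassRel E u v) w w) ∧
    ∀ a b : V, Relation.ReflTransGen (bypassRel E u v) a b →
      Relation.ReflTransGen E a b :=
  bypass_dag_reach_general E hacyc u v he
end
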